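/- Let A_1,…,A_N ∈ GL_d(ℝ), let Q be a d×d real matrix, and let k be an integer with k ≤ rank Q such that (A_1,…,A_N) is k-irreducible. Let κ > 0 be any constant such that for every orthogonal projection B ∈ M_d(ℝ) of rank k there is a word 𝚔 with |𝚔| ≤ C(d,k) and σ_k(Q A_𝚔 B) ≥ κ. Then for every word 𝚒 there exists a word 𝚔 with |𝚔| ≤ C(d,k) such that σ_j(Q A_𝚔 A_𝚒) ≥ κ · σ_j(A_𝚒) for every j = 1,…,k. Here C(d,k) denotes the binomial coefficient d choose k. -/

import Mathlib

open scoped BigOperators Kronecker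

noncomputable section

namespace PaperProj

open Matrix

/-- The `j`-th singular value (`1`-indexed, in decreasing order) of a real square matrix:
the non-negative square roots of the eigenvalues of `AᵀA`, listed in decreasing order
with multiplicity. -/
noncomputable def sval {ι : Type*} [Fintype ι] [DecidableEq ι] (A : Matrix ι ι ℝ) (j : ℕ) : ℝ :=
  ((((Finset.univ.val.map fun i : ι =>
      Real.sqrt ((show (Aᵀ * A).IsHermitian by
        rw [← Matrix.conjTranspose_eq_transpose_of_trivial]
        exact Matrix.isHermitian_conjTranspose_mul_self A).eigenvalues i)).sort
    (· ≤ ·)).reverse).getD (j - 1) 0)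

/-- Falconer's singular value function `φ^s`. -/
noncomputable def svf {ι : Type*} [Fintype ι] [DecidableEq ι] (s : ℝ) (A : Matrix ι ι ℝ) : ℝ :=
  if s ≤ (Fintype.card ι : ℝ) then
    (∏ j ∈ Finset.Icc 1 ⌊s⌋₊, sval A j) * sval A ⌈s⌉₊ ^ (s - (⌊s⌋₊ : ℝ))
  else |A.det| ^ (s / (Fintype.card ι : ℝ))

/-- The product `A_{i_1} ⋯ A_{i_n}` associated to a word `i = i_1 ⋯ i_n`. -/
noncomputable def wordProd {ι : Type*} [Fintype ι] [DecidableEq ι] {N : ℕ}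
    (A : Fin N → Matrix ι ι ℝ) {n : ℕ} (i : Fin n → Fin N) : Matrix ι ι ℝ :=
  (List.ofFn fun j => A (i j)).prod

/-- The affinity dimension: `inf {s > 0 : ∑_{n≥1} ∑_{|i|=n} φ^s(A_i) < ∞}`. -/
noncomputable def affDim {ι : Type*} [Fintype ι] [DecidableEq ι] {N : ℕ}
    (A : Fin N → Matrix ι ι ℝ) : ℝ :=
  sInf {s : ℝ | 0 < s ∧
    Summable fun n : ℕ => ∑ i : Fin (n + 1) → Fin N, svf s (wordProd A i)}

/-- The pressure `P(A_1,…,A_N; s) = lim_n (1/n) log ∑_{|i|=n} φ^s(A_i)` (the limit exists by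
subadditivity, so it equals the limsup used here). -/
noncomputable def pressure {ι : Type*} [Fintype ι] [DecidableEq ι] {N : ℕ}
    (A : Fin N → Matrix ι ι ℝ) (s : ℝ) : ℝ :=
  Filter.limsup
    (fun n : ℕ => Real.log (∑ i : Fin n → Fin N, svf s (wordProd A i)) / n) Filter.atTop

/-- The tuple `(A_1,…,A_N)` is contracting with respect to some norm on `ℝ^d`. -/
def IsContractingTuple {ι : Type*} [Fintype ι] [DecidableEq ι] {N : ℕ}
    (A : Fin N → Matrix ι ι ℝ) : Prop :=
  ∃ (ν : Seminorm ℝ (ι → ℝ)) (c : ℝ), (∀ x : ι → ℝ, x ≠ 0 → 0 < ν x) ∧ c < 1 ∧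
    ∀ (i : Fin N) (x : ι → ℝ), ν ((A i).mulVec x) ≤ c * ν x

/-- Irreducibility: no nonzero proper subspace is preserved by every map of the tuple. -/
def IrreducibleTuple {N : ℕ} {V : Type*} [AddCommGroup V] [Module ℝ V]
    (f : Fin N → V →ₗ[ℝ] V) : Prop :=
  ∀ W : Submodule ℝ V, (∀ i, W.map (f i) ≤ W) → W = ⊥ ∨ W = ⊤

/-- Strong irreducibility: no finite union of nonzero proper subspaces is preserved by
every map of the tuple. -/
def StronglyIrreducibleTuple {N : ℕ} {V : Type*} [AddCommGroup V] [Module ℝ V]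
    (f : Fin N → V →ₗ[ℝ] V) : Prop :=
  ∀ (m : ℕ) (W : Fin (m + 1) → Submodule ℝ V), (∀ j, W j ≠ ⊥) → (∀ j, W j ≠ ⊤) →
    ¬ (∀ i, (f i) '' (⋃ j, (W j : Set V)) = ⋃ j, (W j : Set V))

/-- The linear map induced on the `k`-th exterior power by a linear endomorphism. -/
noncomputable def extPowMap {V : Type*} [AddCommGroup V] [Module ℝ V] (k : ℕ)
    (f : V →ₗ[ℝ] V) : ⋀[ℝ]^k V →ₗ[ℝ] ⋀[ℝ]^k V :=
  (ExteriorAlgebra.map f).toLinearMap.restrict (p := ⋀[ℝ]^k V) (q := ⋀[ℝ]^k V)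
    (by
      intro x hx
      have h : Submodule.map (ExteriorAlgebra.map f).toLinearMap (⋀[ℝ]^k V) ≤ ⋀[ℝ]^k V := by
        conv_lhs => rw [← ExteriorAlgebra.ιMulti_span_fixedDegree]
        rw [Submodule.map_span, Submodule.span_le]
        rintro y ⟨z, ⟨m, rfl⟩, rfl⟩
        rw [AlgHom.toLinearMap_apply, ExteriorAlgebra.map_apply_ιMulti]
        rw [← ExteriorAlgebra.ιMulti_span_fixedDegree]
        exact Submodule.subset_span ⟨_, rfl⟩
      exact h ⟨x, hx, rfl⟩)

instance extPowFree {V : Type*} [AddCommGroup V] [Module ℝ V] (k : ℕ) :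
    Module.Free ℝ (⋀[ℝ]^k V) := Module.Free.of_divisionRing ℝ _

instance extPowFinite {V : Type*} [AddCommGroup V] [Module ℝ V] [Module.Finite ℝ V] (k : ℕ) :
    Module.Finite ℝ (⋀[ℝ]^k V) := by
  rw [Module.Finite.iff_fg]
  refine Submodule.FG.pow ?_ k
  rw [← Submodule.map_top (ExteriorAlgebra.ι ℝ (M := V))]
  exact Submodule.FG.map _ Module.Finite.fg_top

/-- The tuple `(A_1,…,A_N)` is `k`-irreducible: the induced tuple on the `k`-th exterior
power is irreducible. -/
def kIrreducible {ι : Type*} [Fintype ι] [DecidableEq ι] {N : ℕ} (k : ℕ)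
    (A : Fin N → Matrix ι ι ℝ) : Prop :=
  IrreducibleTuple fun i => extPowMap k (Matrix.toLin' (A i))

/-- A linear endomorphism of a finite-dimensional real vector space is proximal if it has a
simple eigenvalue whose modulus strictly exceeds the modulus of every other (complex)
eigenvalue. -/
def ProximalEnd {V : Type*} [AddCommGroup V] [Module ℝ V] [Module.Finite ℝ V]
    [Module.Free ℝ V] (f : V →ₗ[ℝ] V) : Prop :=
  ∃ lam : ℂ, ((LinearMap.charpoly f).map (algebraMap ℝ ℂ)).roots.count lam = 1 ∧
    ∀ mu ∈ ((LinearMap.charpoly f).map (algebraMap ℝ ℂ)).roots, mu ≠ lam →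
      ‖mu‖ < ‖lam‖

/-- The tuple `(A_1,…,A_N)` is proximal of all orders: for each `k = 1,…,d`, some word
product of the induced tuple on the `k`-th exterior power is a proximal linear map. -/
def ProximalAllOrders {ι : Type*} [Fintype ι] [DecidableEq ι] {N : ℕ}
    (A : Fin N → Matrix ι ι ℝ) : Prop :=
  ∀ k : ℕ, 1 ≤ k → k ≤ Fintype.card ι →
    ∃ (n : ℕ) (i : Fin (n + 1) → Fin N),
      ProximalEnd (extPowMap k (Matrix.toLin' (wordProd A i)))

/-- The least number of open `δ`-balls needed to cover `Y` (when `Y` admits a finite cover;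
junk value `0` otherwise). -/
noncomputable def coverNum {E : Type*} [PseudoMetricSpace E] (Y : Set E) (δ : ℝ) : ℕ :=
  sInf {n : ℕ | ∃ t : Finset E, t.card = n ∧ Y ⊆ ⋃ x ∈ t, Metric.ball x δ}

/-- The upper box dimension `limsup_{δ→0⁺} log N(Y,δ) / log (1/δ)`. -/
noncomputable def upperBoxDim {E : Type*} [PseudoMetricSpace E] (Y : Set E) : ℝ :=
  Filter.limsup (fun δ : ℝ => Real.log (coverNum Y δ) / Real.log (1 / δ))
    (nhdsWithin 0 (Set.Ioi 0))

/-- The operator norm of a matrix with respect to the Euclidean norm. -/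
noncomputable def opNorm {ι : Type*} [Fintype ι] [DecidableEq ι] (A : Matrix ι ι ℝ) : ℝ :=
  ‖(Matrix.toEuclideanCLM (𝕜 := ℝ) A : EuclideanSpace ℝ ι →L[ℝ] EuclideanSpace ℝ ι)‖

end PaperProj

/-!
Let `T = A_𝚒` and let `V` be the span of the first `k` right singular vectors of `T`, so that
`‖T w‖ ≥ σ_j(T) ‖w‖` on the span of the first `j` of them. Enlarge `T V` to a `k`-dimensional
subspace `U` and apply the hypothesis to the orthogonal projection `B` onto `U`: this gives a
short word `𝚔` with `σ_k(Q A_𝚔 B) ≥ κ`, and by the min-max principle `‖Q A_𝚔 x‖ ≥ κ ‖x‖` on `U`.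
Hence `‖Q A_𝚔 T w‖ ≥ κ σ_j(T) ‖w‖` on a `j`-dimensional space, and min-max again gives
`σ_j(Q A_𝚔 T) ≥ κ σ_j(T)`.
-/

open Module

theorem Submodule.exists_mem_ne_zero_of_finrank_lt {K V : Type*} [DivisionRing K]
    [AddCommGroup V] [Module K V] [FiniteDimensional K V] {W₁ W₂ : Submodule K V}
    (h : finrank K V < finrank K W₁ + finrank K W₂) : ∃ z ∈ W₁, z ∈ W₂ ∧ z ≠ 0 := by
  by_contra! hcon
  exact (Submodule.finrank_add_finrank_le_of_disjoint (Submodule.disjoint_def.2 hcon)).not_gt h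

theorem Submodule.exists_le_finrank_eq {K V : Type*} [DivisionRing K] [AddCommGroup V]
    [Module K V] [FiniteDimensional K V] (W : Submodule K V) {k : ℕ} (hWk : finrank K W ≤ k)
    (hk : k ≤ finrank K V) : ∃ U, W ≤ U ∧ finrank K U = k := by
  induction k with
  | zero => exact ⟨W, le_rfl, Nat.le_zero.1 hWk⟩
  | succ k ih =>
    rcases hWk.eq_or_lt with hW | hW
    · exact ⟨W, le_rfl, hW⟩
    obtain ⟨U, hWU, hU⟩ := ih (Nat.lt_succ_iff.1 hW) (Nat.le_of_succ_le hk)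
    obtain ⟨v, hv⟩ : ∃ v, v ∉ U := SetLike.exists_not_mem_of_ne_top U
      (fun h => by rw [h, finrank_top] at hU; omega)
    exact ⟨U ⊔ Submodule.span K {v}, hWU.trans le_sup_left,
      by rw [Submodule.finrank_sup_span_singleton hv, hU]⟩

theorem OrthonormalBasis.repr_eq_zero_of_mem_span {𝕜 E ι : Type*} [RCLike 𝕜]
    [NormedAddCommGroup E] [InnerProductSpace 𝕜 E] [Fintype ι]
    (b : OrthonormalBasis ι 𝕜 E) {s : Set ι} {w : E} (hw : w ∈ Submodule.span 𝕜 (b '' s))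
    {i : ι} (hi : i ∉ s) : b.repr w i = 0 := by
  rw [← b.coe_toBasis, Basis.mem_span_image] at hw
  simpa using mt (@hw i) hi

namespace LinearMap

variable {𝕜 E F G : Type*} [RCLike 𝕜]
  [NormedAddCommGroup E] [InnerProductSpace 𝕜 E] [FiniteDimensional 𝕜 E]
  [NormedAddCommGroup F] [InnerProductSpace 𝕜 F] [FiniteDimensional 𝕜 F]
  [NormedAddCommGroup G] [InnerProductSpace 𝕜 G] [FiniteDimensional 𝕜 G]
  (T : E →ₗ[𝕜] F)

/-- `eigenvectorBasis` lists the eigenvalues in decreasing order, so this basis is ordered by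
decreasing singular value. -/
noncomputable def rightSingularBasis : OrthonormalBasis (Fin (finrank 𝕜 E)) 𝕜 E :=
  T.isSymmetric_adjoint_comp_self.eigenvectorBasis rfl

noncomputable def rightSingularSpan (k : ℕ) : Submodule 𝕜 E :=
  Submodule.span 𝕜 (T.rightSingularBasis '' {i | (i : ℕ) < k})

theorem norm_apply_sq_eq_sum (w : E) :
    ‖T w‖ ^ 2 = ∑ i : Fin (finrank 𝕜 E),
      T.singularValues i ^ 2 * ‖T.rightSingularBasis.repr w i‖ ^ 2 := by
  have hT := T.isSymmetric_adjoint_comp_self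
  suffices (‖T w‖ ^ 2 : 𝕜) = ((∑ i : Fin (finrank 𝕜 E),
      T.singularValues i ^ 2 * ‖T.rightSingularBasis.repr w i‖ ^ 2 : ℝ) : 𝕜) by
    exact_mod_cast this
  rw [← inner_self_eq_norm_sq_to_K, ← adjoint_inner_right, ← LinearMap.comp_apply,
    ← T.rightSingularBasis.repr.inner_map_map, PiLp.inner_apply, RCLike.ofReal_sum]
  refine Finset.sum_congr rfl fun i _ => ?_
  rw [rightSingularBasis, hT.eigenvectorBasis_apply_self_apply, ← sq_singularValues_fin,
    RCLike.inner_apply, mul_assoc, RCLike.mul_conj]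
  push_cast
  rfl

theorem finrank_rightSingularSpan (k : ℕ) :
    finrank 𝕜 (T.rightSingularSpan k) = min (finrank 𝕜 E) k := by
  rw [rightSingularSpan, Set.image_eq_range, finrank_span_eq_card]
  · simp [Fin.card_filter_val_lt]
  · exact T.rightSingularBasis.orthonormal.linearIndependent.comp _ Subtype.val_injective

theorem rightSingularSpan_mono {j k : ℕ} (h : j ≤ k) :
    T.rightSingularSpan j ≤ T.rightSingularSpan k :=
  Submodule.span_mono (Set.image_mono fun _ hi => lt_of_lt_of_le hi h)

theorem singularValues_mul_norm_le_norm_apply {j : ℕ} {w : E}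
    (hw : w ∈ T.rightSingularSpan (j + 1)) : T.singularValues j * ‖w‖ ≤ ‖T w‖ := by
  refine le_of_pow_le_pow_left₀ two_ne_zero (norm_nonneg _) ?_
  rw [mul_pow, T.norm_apply_sq_eq_sum, ← T.rightSingularBasis.repr.norm_map,
    EuclideanSpace.norm_sq_eq, Finset.mul_sum]
  refine Finset.sum_le_sum fun i _ => ?_
  by_cases hi : (i : ℕ) ≤ j
  · gcongr
    · exact T.singularValues_nonneg _
    · exact T.singularValues_antitone hi
  · rw [OrthonormalBasis.repr_eq_zero_of_mem_span _ hw (by simpa using hi)]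
    simp

theorem norm_apply_le_singularValues_mul_norm {j : ℕ} {w : E}
    (hw : w ∈ (T.rightSingularSpan j)ᗮ) : ‖T w‖ ≤ T.singularValues j * ‖w‖ := by
  refine le_of_pow_le_pow_left₀ two_ne_zero
    (mul_nonneg (T.singularValues_nonneg _) (norm_nonneg _)) ?_
  rw [mul_pow, T.norm_apply_sq_eq_sum, ← T.rightSingularBasis.repr.norm_map,
    EuclideanSpace.norm_sq_eq, Finset.mul_sum]
  refine Finset.sum_le_sum fun i _ => ?_
  by_cases hi : j ≤ (i : ℕ)
  · gcongr
    · exact T.singularValues_nonneg _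
    · exact T.singularValues_antitone hi
  · have : T.rightSingularBasis i ∈ T.rightSingularSpan j :=
      Submodule.subset_span ⟨i, by simpa using hi, rfl⟩
    rw [OrthonormalBasis.repr_apply_apply, Submodule.inner_right_of_mem_orthogonal this hw]
    simp

theorem le_singularValues_of_le_norm_apply {W : Submodule 𝕜 E} {j : ℕ} (hW : j < finrank 𝕜 W)
    {c : ℝ} (hc : ∀ w ∈ W, c * ‖w‖ ≤ ‖T w‖) : c ≤ T.singularValues j := by
  have hjE : j ≤ finrank 𝕜 E := hW.le.trans (Submodule.finrank_le W)
  obtain ⟨z, hzW, hzS, hz0⟩ := Submodule.exists_mem_ne_zero_of_finrank_lt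
    (W₁ := W) (W₂ := (T.rightSingularSpan j)ᗮ) (by
      have := (T.rightSingularSpan j).finrank_add_finrank_orthogonal
      rw [T.finrank_rightSingularSpan, min_eq_right hjE] at this
      omega)
  exact le_of_mul_le_mul_right ((hc z hzW).trans (T.norm_apply_le_singularValues_mul_norm hzS))
    (norm_pos_iff.2 hz0)

theorem singularValues_le_of_norm_apply_le {W : Submodule 𝕜 E} {j : ℕ}
    (hW : finrank 𝕜 E ≤ finrank 𝕜 W + j) {c : ℝ} (hc0 : 0 ≤ c)
    (hc : ∀ w ∈ W, ‖T w‖ ≤ c * ‖w‖) : T.singularValues j ≤ c := by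
  rcases le_or_gt (finrank 𝕜 E) j with hjE | hjE
  · rwa [T.singularValues_of_finrank_le hjE]
  obtain ⟨z, hzW, hzS, hz0⟩ := Submodule.exists_mem_ne_zero_of_finrank_lt
    (W₁ := W) (W₂ := T.rightSingularSpan (j + 1)) (by
      rw [T.finrank_rightSingularSpan, min_eq_right hjE]
      omega)
  exact le_of_mul_le_mul_right ((T.singularValues_mul_norm_le_norm_apply hzS).trans (hc z hzW))
    (norm_pos_iff.2 hz0)

theorem mul_singularValues_le_singularValues_comp (M : F →ₗ[𝕜] G) {κ : ℝ} (hκ : 0 ≤ κ) {k : ℕ}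
    (hM : ∀ w ∈ T.rightSingularSpan k, κ * ‖T w‖ ≤ ‖M (T w)‖) {j : ℕ} (hj : j < k) :
    κ * T.singularValues j ≤ (M ∘ₗ T).singularValues j := by
  rcases le_or_gt (finrank 𝕜 E) j with hjE | hjE
  · simp [T.singularValues_of_finrank_le hjE, (M ∘ₗ T).singularValues_of_finrank_le hjE]
  refine le_singularValues_of_le_norm_apply _ (W := T.rightSingularSpan (j + 1)) ?_ fun w hw => ?_
  · rw [T.finrank_rightSingularSpan, min_eq_right hjE]
    exact j.lt_succ_self
  calc κ * T.singularValues j * ‖w‖ = κ * (T.singularValues j * ‖w‖) := mul_assoc _ _ _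
    _ ≤ κ * ‖T w‖ := by gcongr; exact T.singularValues_mul_norm_le_norm_apply hw
    _ ≤ ‖M (T w)‖ := hM w (T.rightSingularSpan_mono hj hw)

omit [FiniteDimensional 𝕜 G] in
theorem singularValues_comp_starProjection_mul_norm_le (M : E →ₗ[𝕜] F) (U : Submodule 𝕜 E)
    {x : E} (hx : x ∈ U) :
    (M ∘ₗ U.starProjection.toLinearMap).singularValues (finrank 𝕜 U - 1) * ‖x‖ ≤ ‖M x‖ := by
  rcases eq_or_ne x 0 with rfl | hx0
  · simp
  have hxU : x ∉ Uᗮ := fun h => hx0 (Submodule.disjoint_def.1 U.orthogonal_disjoint x hx h)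
  have hP : ∀ w ∈ Uᗮ ⊔ Submodule.span 𝕜 {x},
      ‖(M ∘ₗ U.starProjection.toLinearMap) w‖ ≤ ‖M x‖ / ‖x‖ * ‖w‖ := by
    intro w hw
    obtain ⟨v, hv, y, hy, rfl⟩ := Submodule.mem_sup.1 hw
    obtain ⟨a, rfl⟩ := Submodule.mem_span_singleton.1 hy
    have hPw : U.starProjection (v + a • x) = a • x := by
      rw [map_add, (U.starProjection_apply_eq_zero_iff).2 hv, zero_add,
        Submodule.starProjection_eq_self_iff.2 (U.smul_mem a hx)]
    calc ‖(M ∘ₗ U.starProjection.toLinearMap) (v + a • x)‖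
          = ‖M x‖ / ‖x‖ * ‖U.starProjection (v + a • x)‖ := by
          rw [LinearMap.comp_apply, ContinuousLinearMap.coe_coe, hPw, map_smul, norm_smul,
            norm_smul, mul_left_comm, div_mul_cancel₀ _ (norm_ne_zero_iff.2 hx0)]
      _ ≤ ‖M x‖ / ‖x‖ * ‖v + a • x‖ := by gcongr; exact U.norm_starProjection_apply_le _
  have hdim : finrank 𝕜 E ≤ finrank 𝕜 ↥(Uᗮ ⊔ Submodule.span 𝕜 {x}) + (finrank 𝕜 U - 1) := by
    rw [Submodule.finrank_sup_span_singleton hxU]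
    have := U.finrank_add_finrank_orthogonal
    omega
  calc _ ≤ ‖M x‖ / ‖x‖ * ‖x‖ := by
        gcongr
        exact singularValues_le_of_norm_apply_le _ hdim (by positivity) hP
    _ = ‖M x‖ := div_mul_cancel₀ _ (norm_ne_zero_iff.2 hx0)

end LinearMap

theorem Multiset.reverse_sort_ofFn_of_antitone {α : Type*} [LinearOrder α] {n : ℕ}
    {g : Fin n → α} (hg : Antitone g) :
    (Multiset.sort (↑(List.ofFn g)) (· ≤ ·)).reverse = List.ofFn g := by
  rw [List.reverse_eq_iff]
  exact (Multiset.coe_eq_coe.1 (Multiset.sort_eq _ _)).eq_reverse_of_sortedLE_of_sortedGE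
    (List.sortedLE_iff_pairwise.2 (Multiset.pairwise_sort _ _)) hg.sortedGE_ofFn

namespace Matrix

variable {𝕜 m n : Type*} [RCLike 𝕜] [Fintype m] [DecidableEq m] [Fintype n] [DecidableEq n]

theorem adjoint_toEuclideanLin_comp_self (A : Matrix m n 𝕜) :
    LinearMap.adjoint (toEuclideanLin A) ∘ₗ toEuclideanLin A = toEuclideanLin (Aᴴ * A) := by
  rw [← toEuclideanLin_conjTranspose_eq_adjoint, toLpLin_mul_same]

theorem exists_matrix_eq_starProjection (U : Submodule 𝕜 (EuclideanSpace 𝕜 n)) :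
    ∃ B : Matrix n n 𝕜, B * B = B ∧ Bᴴ = B ∧ B.rank = finrank 𝕜 U ∧
      toEuclideanLin B = U.starProjection.toLinearMap := by
  set B := toEuclideanLin.symm U.starProjection.toLinearMap
  have hB : toEuclideanLin B = U.starProjection.toLinearMap := toEuclideanLin.apply_symm_apply _
  refine ⟨B, toEuclideanLin.injective ?_, ?_, ?_, hB⟩
  · rw [toLpLin_mul_same, hB]
    exact (ContinuousLinearMap.isIdempotentElem_toLinearMap_iff.2
      U.isIdempotentElem_starProjection).eq
  · exact isSymmetric_toEuclideanLin_iff.1 (hB ▸ U.starProjection_isSymmetric)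
  · rw [rank_eq_finrank_range_toLin B (PiLp.basisFun 2 𝕜 n) (PiLp.basisFun 2 𝕜 n),
      ← toLpLin_eq_toLin, hB]
    exact congrArg (fun V : Submodule 𝕜 _ => finrank 𝕜 V) U.range_starProjection

end Matrix

namespace PaperProj

open Matrix

theorem sval_succ {ι : Type*} [Fintype ι] [DecidableEq ι] (A : Matrix ι ι ℝ) (j : ℕ) :
    sval A (j + 1) = (toEuclideanLin A).singularValues j := by
  have hA : (Aᵀ * A).IsHermitian := by
    rw [← conjTranspose_eq_transpose_of_trivial]
    exact isHermitian_conjTranspose_mul_self A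
  have hev : (fun i : Fin (Fintype.card ι) => (toEuclideanLin A).singularValues i) =
      Real.sqrt ∘ hA.eigenvalues₀ := by
    funext i
    rw [Function.comp_apply,
      (toEuclideanLin A).singularValues_fin (finrank_euclideanSpace (𝕜 := ℝ) (ι := ι)) i]
    congr 1
    exact congrFun ((LinearMap.IsSymmetric.eigenvalues_eq_eigenvalues_iff _ _ _ _).2
      (by rw [adjoint_toEuclideanLin_comp_self, conjTranspose_eq_transpose_of_trivial])) i
  have hmap : (Finset.univ.val.map fun i : ι => Real.sqrt (hA.eigenvalues i)) =
      ↑(List.ofFn fun i : Fin (Fintype.card ι) => (toEuclideanLin A).singularValues i) := by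
    rw [hev, ← Fin.univ_val_map, ← Multiset.map_univ_val_equiv
      (Fintype.equivOfCardEq (Fintype.card_fin _)).symm, Multiset.map_map]
    rfl
  rw [sval, Nat.add_sub_cancel, hmap, Multiset.reverse_sort_ofFn_of_antitone,
    List.getD_eq_getElem?_getD, List.getElem?_ofFn]
  · split_ifs with hj
    · rfl
    · exact (LinearMap.singularValues_of_finrank_le _ (by simpa using hj)).symm
  · exact (toEuclideanLin A).singularValues_antitone.comp_monotone Fin.val_strictMono.monotone

theorem mul_norm_le_of_le_sval_mul_starProjection {ι : Type*} [Fintype ι] [DecidableEq ι]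
    {M B : Matrix ι ι ℝ} {U : Submodule ℝ (EuclideanSpace ℝ ι)}
    (hB : toEuclideanLin B = U.starProjection.toLinearMap) {κ : ℝ}
    (hκ : κ ≤ sval (M * B) (finrank ℝ U)) {x : EuclideanSpace ℝ ι} (hx : x ∈ U) :
    κ * ‖x‖ ≤ ‖toEuclideanLin M x‖ := by
  rcases (finrank ℝ U).eq_zero_or_pos with hU | hU
  · rw [Submodule.finrank_eq_zero.1 hU, Submodule.mem_bot] at hx
    simp [hx]
  rw [← Nat.sub_add_cancel hU, sval_succ, toLpLin_mul_same, hB] at hκ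
  calc κ * ‖x‖ ≤ _ * ‖x‖ := by gcongr
    _ ≤ _ := LinearMap.singularValues_comp_starProjection_mul_norm_le _ U hx

theorem statement5_general {d N : ℕ} (A : Fin N → Matrix (Fin d) (Fin d) ℝ)
    (Q : Matrix (Fin d) (Fin d) ℝ) (k : ℕ)
    (hk2 : k ≤ Q.rank)
    (κ : ℝ) (hκ : 0 < κ)
    (hbound : ∀ B : Matrix (Fin d) (Fin d) ℝ, B * B = B → Bᵀ = B → B.rank = k →
      ∃ (m : ℕ) (kk : Fin m → Fin N), m ≤ Nat.choose d k ∧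
        κ ≤ sval (Q * wordProd A kk * B) k) :
    ∀ (n : ℕ) (i : Fin n → Fin N),
      ∃ (m : ℕ) (kk : Fin m → Fin N), m ≤ Nat.choose d k ∧
        ∀ j : ℕ, 1 ≤ j → j ≤ k →
          κ * sval (wordProd A i) j ≤ sval (Q * wordProd A kk * wordProd A i) j := by
  intro n i
  set T := toEuclideanLin (wordProd A i)
  have hkd : k ≤ finrank ℝ (EuclideanSpace ℝ (Fin d)) := by
    simpa using hk2.trans Q.rank_le_card_width
  obtain ⟨U, hTU, hU⟩ := ((T.rightSingularSpan k).map T).exists_le_finrank_eq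
    ((Submodule.finrank_map_le _ _).trans (by simp [T.finrank_rightSingularSpan])) hkd
  obtain ⟨B, hBB, hBt, hBrank, hB⟩ := exists_matrix_eq_starProjection U
  obtain ⟨m, kk, hm, hκB⟩ := hbound B hBB (by simpa using hBt) (hBrank.trans hU)
  refine ⟨m, kk, hm, fun j hj1 hjk => ?_⟩
  obtain ⟨j, rfl⟩ : ∃ j', j = j' + 1 := ⟨j - 1, by omega⟩
  rw [sval_succ, sval_succ, toLpLin_mul_same]
  refine T.mul_singularValues_le_singularValues_comp _ hκ.le (fun w hw => ?_) hjk
  exact mul_norm_le_of_le_sval_mul_starProjection hB (hU ▸ hκB) (hTU ⟨w, hw, rfl⟩)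

/-- second half of the proof of Lemma 4. Suppose `κ > 0` is such that for
every rank-`k` orthogonal projection `B` there is a word `kk` of length at most `d.choose k`
with `σ_k(Q A_kk B) ≥ κ`. Then for every word `i` there is a word `kk` of length at most
`d.choose k` such that `σ_j(Q A_kk A_i) ≥ κ σ_j(A_i)` for every `j = 1,…,k`. -/
theorem statement5 {d N : ℕ} (A : Fin N → Matrix (Fin d) (Fin d) ℝ)
    (hInv : ∀ i, IsUnit (A i)) (Q : Matrix (Fin d) (Fin d) ℝ) (k : ℕ)
    (hk0 : 1 ≤ k) (hk2 : k ≤ Q.rank) (hkirr : kIrreducible k A)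
    (κ : ℝ) (hκ : 0 < κ)
    (hbound : ∀ B : Matrix (Fin d) (Fin d) ℝ, B * B = B → Bᵀ = B → B.rank = k →
      ∃ (m : ℕ) (kk : Fin m → Fin N), m ≤ Nat.choose d k ∧
        κ ≤ sval (Q * wordProd A kk * B) k) :
    ∀ (n : ℕ) (i : Fin n → Fin N),
      ∃ (m : ℕ) (kk : Fin m → Fin N), m ≤ Nat.choose d k ∧
        ∀ j : ℕ, 1 ≤ j → j ≤ k →
          κ * sval (wordProd A i) j ≤ sval (Q * wordProd A kk * wordProd A i) j :=
  statement5_general A Q k hk2 κ hκ hbound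

end PaperProj
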